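/- Let h ∈ (0,1). For every c₁ > 0 there exist λ̄ ∈ (0,1) and c₂ > 0 such that for all λ ∈ (0, λ̄] and all r ∈ ℝ one has F_λ(r) ≥ c₁·r² − c₂. -/
import Mathlib


/-- Convex singular part `F_{1,λ}` of the regularized Lennard--Jones potential. -/
noncomputable def F1reg (h l r : ℝ) : ℝ :=
  if r < 0 then -r^3/l + h/2 * r^2 + h*r
  else if r < 1 - l then -h * Real.log (1 - r)
  else -h * Real.log l + 3*h/2 - 2*h/l * (1 - r) + h/(2*l^2) * (1 - r)^2

/-- Non-convex regular part `F̄₂` of the regularized Lennard--Jones potential. -/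
noncomputable def F2reg (h r : ℝ) : ℝ :=
  if r < 1 then -r^3/3 - h*(r^2/2 + r)
  else -1/3 - 3*h/2 - (1 + 2*h)*(r - 1) - (2 + h)/2 * (r - 1)^2

/-- The regularized potential `F_λ = F_{1,λ} + F̄₂`. -/
noncomputable def Freg (h l r : ℝ) : ℝ := F1reg h l r + F2reg h r

/-- For every `c₁ > 0` there are `λ̄ ∈ (0,1)` and `c₂ > 0` (independent of `λ`) with
`F_λ(r) ≥ c₁ r² - c₂` for all `λ ∈ (0,λ̄]` and all `r ∈ ℝ`. -/
theorem Freg_quadratic_lower_bound (h : ℝ) (hh : h ∈ Set.Ioo (0:ℝ) 1)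
    (c₁ : ℝ) (hc₁ : 0 < c₁) :
    ∃ lb ∈ Set.Ioo (0:ℝ) 1, ∃ c₂ > (0:ℝ),
      ∀ l ∈ Set.Ioc (0:ℝ) lb, ∀ r : ℝ, c₁ * r^2 - c₂ ≤ Freg h l r := by
  obtain ⟨hh0, hh1⟩ := hh
  have hden : (0:ℝ) < 4*c₁ + 2 + h := by linarith
  refine ⟨h / (4*c₁ + 2 + h), ⟨by positivity, (div_lt_one hden).mpr (by linarith)⟩,
    9*c₁^3 + 4*c₁ + 4, by positivity, ?_⟩
  rintro l ⟨hl0, hl1⟩ r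
  have hkey : l * (4*c₁ + 2 + h) ≤ h := (le_div_iff₀ hden).mp hl1
  have hl1' : l < 1 := by nlinarith
  simp only [Freg, F1reg, F2reg]
  rcases lt_or_ge r 0 with hr | hr
  · -- r < 0
    rw [if_pos hr, if_pos (by linarith : r < 1)]
    have h3 : r ^ 3 ≤ 0 := by nlinarith [sq_nonneg r]
    have hdiv : 0 ≤ -r^3 / l := div_nonneg (by linarith) hl0.le
    nlinarith [mul_nonneg (neg_nonneg.2 hr.le) (sq_nonneg (r + 3*c₁)),
      mul_nonneg hc₁.le (sq_nonneg (r + 3*c₁/2)), hdiv, sq_nonneg r,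
      mul_pos hc₁ hc₁, mul_pos (mul_pos hc₁ hc₁) hc₁]
  · rw [if_neg (not_lt.2 hr)]
    rcases lt_or_ge r (1 - l) with hr2 | hr2
    · -- 0 ≤ r < 1 - l
      rw [if_pos hr2, if_pos (by linarith : r < 1)]
      have hlog : Real.log (1 - r) ≤ 0 := Real.log_nonpos (by linarith) (by linarith)
      have : 0 ≤ -h * Real.log (1 - r) := by nlinarith
      nlinarith [sq_nonneg r, mul_nonneg hh0.le (sq_nonneg r),
        mul_pos (mul_pos hc₁ hc₁) hc₁,
        mul_nonneg hc₁.le (mul_nonneg (by linarith : (0:ℝ) ≤ 1 - r) (by linarith : (0:ℝ) ≤ 1 + r)),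
        mul_nonneg (mul_nonneg hr hr) hr]
    · rw [if_neg (not_lt.2 hr2)]
      have hlog : 0 ≤ -h * Real.log l := by
        have := Real.log_nonpos hl0.le hl1'.le
        nlinarith
      rcases lt_or_ge r 1 with hr3 | hr3
      · -- 1 - l ≤ r < 1
        rw [if_pos hr3]
        have hquad : 0 ≤ h/(2*l^2) * (1 - r)^2 := by positivity
        have hlin : 2*h/l * (1 - r) ≤ 2*h := by
          rw [div_mul_eq_mul_div, div_le_iff₀ hl0]
          nlinarith
        nlinarith [sq_nonneg r, mul_nonneg hh0.le (sq_nonneg r),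
          mul_pos (mul_pos hc₁ hc₁) hc₁,
          mul_nonneg hc₁.le (mul_nonneg (by linarith : (0:ℝ) ≤ 1 - r) (by linarith : (0:ℝ) ≤ 1 + r)),
          mul_nonneg (mul_nonneg hr hr) hr]
      · -- r ≥ 1
        rw [if_neg (not_lt.2 hr3)]
        have hA : 2*c₁ + (2 + h)/2 ≤ h/(2*l^2) := by
          rw [le_div_iff₀ (by positivity : (0:ℝ) < 2*l^2)]
          nlinarith [sq_nonneg l, mul_le_of_le_one_left hl0.le hl1'.le]
        have hB : 1 + 2*h ≤ 2*h/l := by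
          rw [le_div_iff₀ hl0]
          nlinarith
        have hrm : 0 ≤ r - 1 := by linarith
        nlinarith [mul_nonneg (by linarith : (0:ℝ) ≤ 2*h/l - (1 + 2*h)) hrm,
          mul_nonneg (by linarith : (0:ℝ) ≤ h/(2*l^2) - (2*c₁ + (2+h)/2)) (sq_nonneg (r-1)),
          mul_nonneg hc₁.le (sq_nonneg (r - 2)), hlog, sq_nonneg (r-1),
          mul_pos (mul_pos hc₁ hc₁) hc₁]
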